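/- Change of the h-polynomial under edge stellar subdivision: let K be a simplicial complex, e = {a,b} an edge of K, w a vertex not belonging to K, and n any integer with n ≥ dim K + 1. Then, in ℤ[t], h_n(sd_e(K))(t) = h_n(K)(t) + t·h_{n-2}(link_K(e))(t), where h_m(L)(t) = Σ_{i=0}^{m} f_{i-1}(L)·tⁱ·(1-t)^{m-i}. (Dual form of the proposition γ(P̃) = γ(P) + τ·γ(G) for a 2-truncation of a simple polytope along a codimension-2 face G.) -/

import Mathlib

open Polynomial
open scoped Classical

/-- A (finite) simplicial complex: a family of finite faces closed under subsets. -/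
def IsComplex {V : Type*} (K : Finset (Finset V)) : Prop :=
  ∀ F ∈ K, ∀ G ⊆ F, G ∈ K

/-- A flag simplicial complex: any set of vertices that is pairwise connected
by edges of `K` is a face of `K`. -/
def IsFlag {V : Type*} [DecidableEq V] (K : Finset (Finset V)) : Prop :=
  IsComplex K ∧ ∀ S : Finset V,
    (∀ v ∈ S, ({v} : Finset V) ∈ K) →
    (∀ u ∈ S, ∀ v ∈ S, u ≠ v → ({u, v} : Finset V) ∈ K) →
    S ∈ K

/-- The link of a face `σ` in `K`. -/
noncomputable def link {V : Type*} [DecidableEq V] (K : Finset (Finset V)) (σ : Finset V) :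
    Finset (Finset V) :=
  K.filter fun F => Disjoint F σ ∧ F ∪ σ ∈ K

/-- Stellar subdivision of `K` at the face `e` with (fresh) apex `w`:
`sd_e(K) = {F ∈ K : ¬(e ⊆ F)} ∪ {F ∪ S ∪ {w} : F ∈ link_K(e), S ⊊ e}`. -/
noncomputable def stellarSub {V : Type*} [DecidableEq V] (K : Finset (Finset V))
    (e : Finset V) (w : V) : Finset (Finset V) :=
  (K.filter fun F => ¬ e ⊆ F) ∪
    (link K e).biUnion fun F => e.ssubsets.image fun S => F ∪ S ∪ {w}

/-- The f-polynomial `f(K)(t) = Σ_{F ∈ K} t^|F| = Σ_i f_{i-1}(K) tⁱ`. -/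
noncomputable def fPoly {V : Type*} (K : Finset (Finset V)) : ℤ[X] :=
  ∑ F ∈ K, X ^ F.card

/-- The h-polynomial of rank `n`:
`h_n(K)(t) = Σ_{i=0}^{n} f_{i-1}(K) tⁱ (1-t)^{n-i} = Σ_{F ∈ K} t^|F| (1-t)^{n-|F|}`. -/
noncomputable def hPoly {V : Type*} (K : Finset (Finset V)) (n : ℕ) : ℤ[X] :=
  ∑ F ∈ K, X ^ F.card * (1 - X) ^ (n - F.card)

/-- `faceCount K i = f_{i-1}(K)`, the number of faces of `K` of cardinality `i`. -/
noncomputable def faceCount {V : Type*} (K : Finset (Finset V)) (i : ℕ) : ℕ :=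
  (K.filter fun F => F.card = i).card

/-- The boundary complex `∂♢ⁿ` of the `n`-dimensional cross-polytope, with
vertices `a_i = 2i`, `b_i = 2i+1` (`0 ≤ i < n`): all subsets containing at most
one of `a_i, b_i` for each `i`. -/
noncomputable def crossPolytopeBoundary (n : ℕ) : Finset (Finset ℕ) :=
  (Finset.range (2 * n)).powerset.filter fun F =>
    ∀ i < n, ¬ (2 * i ∈ F ∧ 2 * i + 1 ∈ F)

/-- Complexes obtained from `∂♢ⁿ` by a finite sequence of stellar subdivisions
at edges, each with a fresh apex vertex: the boundary complexes of duals of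
2-truncated `n`-cubes. -/
inductive TwoTruncated (n : ℕ) : Finset (Finset ℕ) → Prop
  | base : TwoTruncated n (crossPolytopeBoundary n)
  | step (K : Finset (Finset ℕ)) (a b w : ℕ) :
      TwoTruncated n K → a ≠ b → ({a, b} : Finset ℕ) ∈ K →
      (∀ F ∈ K, w ∉ F) →
      TwoTruncated n (stellarSub K {a, b} w)

/-!
Let `s_F = t^|F| (1-t)^(n-|F|)`, so that `h_n(K) = Σ_{F ∈ K} s_F`. For each face `G` of the link
of `e`, the subdivision removes the face `G ∪ e` and adds the faces `G ∪ S ∪ {w}`, `S ⊊ e`; the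
new faces are all distinct, since `G = F \ (e ∪ {w})` and `S = F ∩ e`. For an edge, with
`|G| = g` and `n = g + 2 + m`, the net change per `G` is
`t^(g+1) (1-t)^(m+1) + 2 t^(g+2) (1-t)^m - t^(g+2) (1-t)^m = t · t^g (1-t)^m`.
-/

open Finset

theorem Finset.sum_ssubsets_apply_card {α M : Type*} [DecidableEq α] [AddCommGroup M]
    (s : Finset α) (f : ℕ → M) :
    ∑ t ∈ s.ssubsets, f t.card = ∑ m ∈ range s.card, s.card.choose m • f m := by
  rw [ssubsets, sum_erase_eq_sub (mem_powerset_self s), sum_powerset_apply_card, sum_range_succ,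
    Nat.choose_self, one_smul, add_sub_cancel_right]

section StellarSubdivision

variable {V : Type*} [DecidableEq V]

theorem mem_link {K : Finset (Finset V)} {σ G : Finset V} :
    G ∈ link K σ ↔ G ∈ K ∧ Disjoint G σ ∧ G ∪ σ ∈ K := by
  simp only [link, mem_filter]

theorem sum_filter_superset_eq_sum_link {M : Type*} [AddCommMonoid M] {K : Finset (Finset V)}
    (hK : IsComplex K) (e : Finset V) (f : Finset V → M) :
    ∑ F ∈ K with e ⊆ F, f F = ∑ G ∈ link K e, f (G ∪ e) := by
  refine sum_nbij' (· \ e) (· ∪ e) ?_ ?_ ?_ ?_ ?_ <;> intro F hF <;>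
    simp only [mem_filter, mem_link] at hF ⊢
  · refine ⟨hK F hF.1 _ sdiff_subset, sdiff_disjoint, ?_⟩
    rw [sdiff_union_of_subset hF.2]
    exact hF.1
  · exact ⟨hF.2.2, subset_union_right⟩
  · exact sdiff_union_of_subset hF.2
  · exact union_sdiff_cancel_right hF.2.1
  · rw [sdiff_union_of_subset hF.2]

theorem union_union_singleton_inter {G S e : Finset V} {w : V} (hG : Disjoint G e) (hS : S ⊆ e)
    (hw : w ∉ e) : (G ∪ S ∪ {w}) ∩ e = S := by
  ext x
  grind [disjoint_left]

theorem union_union_singleton_sdiff {G S e : Finset V} {w : V} (hG : Disjoint G e) (hS : S ⊆ e)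
    (hw : w ∉ G) : (G ∪ S ∪ {w}) \ insert w e = G := by
  ext x
  grind [disjoint_left]

theorem eq_and_eq_of_union_union_singleton_eq {K : Finset (Finset V)} {e G G' S S' : Finset V}
    {w : V} (hw : ∀ F ∈ K, w ∉ F) (hG : G ∈ link K e) (hG' : G' ∈ link K e) (hS : S ⊆ e)
    (hS' : S' ⊆ e) (h : G ∪ S ∪ {w} = G' ∪ S' ∪ {w}) : G = G' ∧ S = S' := by
  obtain ⟨hGK, hGe, hGeK⟩ := mem_link.1 hG
  obtain ⟨hG'K, hG'e, -⟩ := mem_link.1 hG'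
  have hwe : w ∉ e := fun hwe => hw _ hGeK (mem_union_right G hwe)
  constructor
  · rw [← union_union_singleton_sdiff hGe hS (hw G hGK), h,
      union_union_singleton_sdiff hG'e hS' (hw G' hG'K)]
  · rw [← union_union_singleton_inter hGe hS hwe, h, union_union_singleton_inter hG'e hS' hwe]

theorem sum_stellarSub {M : Type*} [AddCommGroup M] {K : Finset (Finset V)} (hK : IsComplex K)
    (e : Finset V) {w : V} (hw : ∀ F ∈ K, w ∉ F) (f : Finset V → M) :
    ∑ F ∈ stellarSub K e w, f F =
      ∑ F ∈ K, f F + ∑ G ∈ link K e, (∑ S ∈ e.ssubsets, f (G ∪ S ∪ {w}) - f (G ∪ e)) := by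
  have hdisj : Disjoint (K.filter fun F => ¬ e ⊆ F)
      ((link K e).biUnion fun G => e.ssubsets.image fun S => G ∪ S ∪ {w}) := by
    refine disjoint_left.2 fun F hF hF' => ?_
    obtain ⟨G, -, S, -, rfl⟩ := by simpa only [mem_biUnion, mem_image] using hF'
    exact hw _ (mem_filter.1 hF).1 (by simp)
  have hpd : (link K e : Set (Finset V)).PairwiseDisjoint
      fun G => e.ssubsets.image fun S => G ∪ S ∪ {w} := by
    refine fun G hG G' hG' hne => disjoint_left.2 fun F hF hF' => hne ?_
    simp only [mem_image, mem_ssubsets] at hF hF'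
    obtain ⟨S, hS, rfl⟩ := hF
    obtain ⟨S', hS', h⟩ := hF'
    exact (eq_and_eq_of_union_union_singleton_eq hw hG hG' hS.subset hS'.subset h.symm).1
  have hinj (G) (hG : G ∈ link K e) : Set.InjOn (fun S => G ∪ S ∪ {w}) e.ssubsets :=
    fun S hS S' hS' h => (eq_and_eq_of_union_union_singleton_eq hw hG hG
      (mem_ssubsets.1 hS).subset (mem_ssubsets.1 hS').subset h).2
  rw [stellarSub, sum_union hdisj, sum_biUnion hpd, ← sum_filter_add_sum_filter_not K (e ⊆ ·),
    sum_filter_superset_eq_sum_link hK, sum_sub_distrib,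
    sum_congr rfl fun G hG => sum_image (hinj G hG)]
  abel

theorem card_union_union_singleton {G S e : Finset V} {w : V} (hG : Disjoint G e) (hS : S ⊆ e)
    (hw : w ∉ G ∪ e) : (G ∪ S ∪ {w}).card = G.card + S.card + 1 := by
  have hwGS : w ∉ G ∪ S := fun h => hw (union_subset_union_right hS h)
  rw [card_union_of_disjoint (disjoint_singleton_right.2 hwGS),
    card_union_of_disjoint (hG.mono_right hS), card_singleton]

end StellarSubdivision

theorem hPoly_stellarSub_general {V : Type*} [DecidableEq V] (K : Finset (Finset V)) (a b w : V)
    (n : ℕ) (hK : IsComplex K) (hab : a ≠ b)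
    (hw : ∀ F ∈ K, w ∉ F) (hn : ∀ F ∈ K, F.card ≤ n) :
    hPoly (stellarSub K {a, b} w) n =
      hPoly K n + X * hPoly (link K {a, b}) (n - 2) := by
  set e : Finset V := {a, b}
  have he : e.card = 2 := card_pair hab
  rw [hPoly, hPoly, sum_stellarSub hK e hw, hPoly, mul_sum]
  congr 1
  refine sum_congr rfl fun G hG => ?_
  obtain ⟨-, hGe, hGeK⟩ := mem_link.1 hG
  have hle : G.card + 2 ≤ n := by simpa only [card_union_of_disjoint hGe, he] using hn _ hGeK
  obtain ⟨m, rfl⟩ := Nat.exists_eq_add_of_le hle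
  have hcard (S) (hS : S ∈ e.ssubsets) : (G ∪ S ∪ {w}).card = G.card + S.card + 1 :=
    card_union_union_singleton hGe (mem_ssubsets.1 hS).subset (hw _ hGeK)
  rw [sum_congr rfl fun S hS => by rw [hcard S hS],
    sum_ssubsets_apply_card e fun k =>
      X ^ (G.card + k + 1) * (1 - X) ^ (G.card + 2 + m - (G.card + k + 1)),
    card_union_of_disjoint hGe, he]
  simp only [sum_range_succ, sum_range_zero, Nat.choose_zero_right, Nat.choose_one_right,
    zero_add, add_zero, nsmul_eq_mul, Nat.cast_ofNat]
  rw [show G.card + 2 + m - (G.card + 1) = m + 1 by omega,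
    show G.card + 2 + m - (G.card + 1 + 1) = m by omega,
    show G.card + 2 + m - 2 - G.card = m by omega]
  ring

/-- Change of the h-polynomial under edge stellar subdivision:
for any `n ≥ dim K + 1` (i.e. all faces of `K` have cardinality `≤ n`),
`h_n(sd_e(K))(t) = h_n(K)(t) + t · h_{n-2}(link_K(e))(t)`. -/
theorem hPoly_stellarSub {V : Type*} [DecidableEq V] (K : Finset (Finset V)) (a b w : V)
    (n : ℕ) (hK : IsComplex K) (hab : a ≠ b) (he : ({a, b} : Finset V) ∈ K)
    (hw : ∀ F ∈ K, w ∉ F) (hn : ∀ F ∈ K, F.card ≤ n) :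
    hPoly (stellarSub K {a, b} w) n =
      hPoly K n + X * hPoly (link K {a, b}) (n - 2) :=
  hPoly_stellarSub_general K a b w n hK hab hw hn
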